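/- For every 2×2 complex unitary matrix U₁ all of whose entries are nonzero, there exists a 2×2 complex unitary matrix U₂ all of whose entries are nonzero such that the (0,0) entry of the product U₂U₁ is zero, and consequently the squared modulus of the (1,0) entry of U₂U₁ equals 1. (In other words, in a two-step quantum game whose one-step transitions have all nonzero amplitudes, the second player's move can be chosen so that the path leading to outcome 0 is completely annihilated and outcome 1 occurs with probability 1.) -/

import Mathlib

/-- For every 2×2 complex unitary matrix `U₁` all of whose entries are nonzero, there
exists a 2×2 complex unitary matrix `U₂` all of whose entries are nonzero such that the
(0,0) entry of `U₂ * U₁` is zero, and consequently the squared modulus of the (1,0)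
entry of `U₂ * U₁` equals 1. -/
theorem quantum_two_step_annihilation
    (U₁ : Matrix (Fin 2) (Fin 2) ℂ)
    (hU₁ : U₁ ∈ Matrix.unitaryGroup (Fin 2) ℂ)
    (hne : ∀ i j, U₁ i j ≠ 0) :
    ∃ U₂ : Matrix (Fin 2) (Fin 2) ℂ,
      U₂ ∈ Matrix.unitaryGroup (Fin 2) ℂ ∧
      (∀ i j, U₂ i j ≠ 0) ∧
      (U₂ * U₁) 0 0 = 0 ∧
      ‖(U₂ * U₁) 1 0‖ ^ 2 = 1 := by
  set a := U₁ 0 0 with ha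
  set c := U₁ 1 0 with hc
  -- column 0 of U₁ is a unit vector
  have hstar : star U₁ * U₁ = 1 := hU₁.1
  have hcol : (starRingEnd ℂ) a * a + (starRingEnd ℂ) c * c = 1 := by
    have := congrFun (congrFun hstar 0) 0
    simpa [Matrix.mul_apply, Fin.sum_univ_two, Matrix.star_apply, ha, hc, Complex.star_def] using this
  refine ⟨!![c, -a; star a, star c], ?_, ?_, ?_, ?_⟩
  · rw [Matrix.mem_unitaryGroup_iff']
    ext i j
    fin_cases i <;> fin_cases j <;>
      simp [Matrix.mul_apply, Fin.sum_univ_two, Matrix.star_apply, Matrix.one_apply, Complex.star_def] <;>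
      ring_nf <;>
      linear_combination hcol
  · intro i j
    fin_cases i <;> fin_cases j <;>
      simp [hne 0 0, hne 1 0, star_eq_zero, neg_eq_zero, ha, hc]
  · simp [Matrix.mul_apply, Fin.sum_univ_two]
    ring
  · have h10 : (!![c, -a; star a, star c] * U₁) 1 0 = 1 := by
      simp [Matrix.mul_apply, Fin.sum_univ_two, Complex.star_def]
      linear_combination hcol
    rw [h10]
    simp
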